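/- arXiv:2202.01136 — 3 statements merged into one kernel-verified Lean document; each statement's English description precedes it below -/
import Mathlib

section
/- Let P be a probability measure on a measurable space Ω, r a probability measure on a measurable space Δ, A ⊆ Ω × Δ a measurable set, and ρ ∈ [0,1). Then the probabilistically robust risk under the 0-1 loss is an ordinary expected risk: ∫_Ω ( ρ-esssup_{δ∼r} 1_A(ω,δ) ) dP(ω) = P({ ω : r({δ : (ω,δ) ∈ A}) > ρ }). -/
open MeasureTheory
open scoped ENNReal

/-- The `ρ`-essential supremum of `f` w.r.t. the measure `p`:
`ρ-esssup_p f = inf { u : ℝ | p {x | f x > u} ≤ ρ }`. -/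
noncomputable def rhoEssSup {Ω : Type*} [MeasurableSpace Ω] (p : Measure Ω) (f : Ω → ℝ)
    (ρ : ℝ≥0∞) : ℝ :=
  sInf {u : ℝ | p {x | f x > u} ≤ ρ}

open Set

/- The superlevel set `{c • 1_S > u}` is `univ`, `S` or `∅` according as `u < 0`, `0 ≤ u < c`
or `c ≤ u`; only the middle case depends on `p S`, and `ρ < p univ` rules out the first. -/
theorem rhoEssSup_indicator_const {Δ : Type*} [MeasurableSpace Δ] (p : Measure Δ) (S : Set Δ)
    {c : ℝ} (hc : 0 ≤ c) {ρ : ℝ≥0∞} (hρ : ρ < p univ) :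
    rhoEssSup p (S.indicator fun _ => c) ρ = if ρ < p S then c else 0 := by
  suffices h : {u : ℝ | p {x | S.indicator (fun _ => c) x > u} ≤ ρ}
      = Ici (if ρ < p S then c else 0) by
    rw [rhoEssSup, h, csInf_Ici]
  ext u
  change p ((S.indicator fun _ => c) ⁻¹' Ioi u) ≤ ρ ↔ _
  simp only [indicator_const_preimage_eq_union, mem_Ici, mem_Ioi]
  rcases lt_or_ge u 0 with hu | hu
  · simp only [hu.trans_le hc, hu, if_true, union_compl_self, not_le.mpr hρ, false_iff, not_le]
    split_ifs <;> linarith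
  · simp only [not_lt.mpr hu, if_false, union_empty]
    split_ifs with huc hS hS
    · simp only [not_le.mpr hS, not_le.mpr huc]
    · simp only [not_lt.mp hS, hu]
    · simp only [measure_empty, zero_le, true_iff]
      linarith
    · simp only [measure_empty, zero_le, hu]

theorem integral_rhoEssSup_indicator_eq_general {Ω Δ : Type*} [MeasurableSpace Ω] [MeasurableSpace Δ]
    (P : Measure Ω) (r : Measure Δ) [IsProbabilityMeasure r]
    (A : Set (Ω × Δ)) (hA : MeasurableSet A) (ρ : ℝ≥0∞) (hρ : ρ < 1) :
    ∫ ω, rhoEssSup r (Set.indicator {δ | (ω, δ) ∈ A} fun _ => (1 : ℝ)) ρ ∂P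
      = (P {ω | ρ < r {δ | (ω, δ) ∈ A}}).toReal := by
  have hmeas : MeasurableSet {ω | ρ < r {δ | (ω, δ) ∈ A}} :=
    measurableSet_lt measurable_const (measurable_measure_prodMk_left hA)
  have hpointwise : (fun ω => rhoEssSup r (Set.indicator {δ | (ω, δ) ∈ A} fun _ => (1 : ℝ)) ρ)
      = {ω | ρ < r {δ | (ω, δ) ∈ A}}.indicator 1 := by
    ext ω
    rw [rhoEssSup_indicator_const r _ zero_le_one (by rwa [measure_univ]), indicator_apply]
    rfl
  rw [hpointwise, integral_indicator_one hmeas, measureReal_def]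

/-- Under the 0-1 loss, the probabilistically robust risk is an ordinary expected risk:
`∫ ω, (ρ-esssup_{δ∼r} 1_A(ω,δ)) dP(ω) = P {ω | r {δ | (ω,δ) ∈ A} > ρ}`. -/
theorem integral_rhoEssSup_indicator_eq {Ω Δ : Type*} [MeasurableSpace Ω] [MeasurableSpace Δ]
    (P : Measure Ω) [IsProbabilityMeasure P] (r : Measure Δ) [IsProbabilityMeasure r]
    (A : Set (Ω × Δ)) (hA : MeasurableSet A) (ρ : ℝ≥0∞) (hρ : ρ < 1) :
    ∫ ω, rhoEssSup r (Set.indicator {δ | (ω, δ) ∈ A} fun _ => (1 : ℝ)) ρ ∂P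
      = (P {ω | ρ < r {δ | (ω, δ) ∈ A}}).toReal :=
  integral_rhoEssSup_indicator_eq_general P r A hA ρ hρ
end

section
/- (Variational CVaR is attained at a quantile.) Let p be a probability measure on a measurable space Ω, f : Ω → ℝ integrable, β ∈ (0,1), and let q ∈ ℝ be a β-quantile of f, i.e., p({f < q}) ≤ β and p({f ≤ q}) ≥ β. Then inf_{α ∈ ℝ} [ α + (1/(1−β)) ∫ (f − α)₊ dp ] = q + (1/(1−β)) ∫ (f − q)₊ dp. -/
/-!
Write `F(α) = α + (1-β)⁻¹ ∫ (f - α)₊`. Moving α to the right of q lowers each `(f - α)₊` by at most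
`α - q`, and only where `f > q`, a set of mass at most `1 - β`; moving α to the left of q raises it
by at least `q - α` wherever `f ≥ q`, a set of mass at least `1 - β`. In both cases the change of
the integral term, scaled by `(1-β)⁻¹`, compensates the change of α, so `F(q) ≤ F(α)`.
-/

open MeasureTheory Set

lemma max_sub_zero_sub_max_sub_zero_le_indicator (q α x : ℝ) :
    max (x - q) 0 - max (x - α) 0 ≤ (Ioi q).indicator (fun _ => α - q) x := by
  by_cases hx : q < x
  · have := le_max_left (x - α) 0
    rw [indicator_of_mem (mem_Ioi.2 hx)]
    exact sub_le_iff_le_add.2 <| max_le (by linarith) (by linarith)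
  · rw [indicator_of_notMem (notMem_Ioi.2 (not_lt.1 hx)),
      max_eq_right (by linarith [not_lt.1 hx])]
    linarith [le_max_right (x - α) 0]

lemma indicator_le_max_sub_zero_sub_max_sub_zero (q α x : ℝ) :
    (Ici q).indicator (fun _ => q - α) x ≤ max (x - α) 0 - max (x - q) 0 := by
  by_cases hx : q ≤ x
  · rw [indicator_of_mem (mem_Ici.2 hx), max_eq_left (sub_nonneg.2 hx)]
    linarith [le_max_left (x - α) 0]
  · rw [indicator_of_notMem (notMem_Ici.2 (not_le.1 hx)),
      max_eq_right (a := x - q) (by linarith [not_le.1 hx])]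
    linarith [le_max_right (x - α) 0]

section Integrals

variable {Ω : Type*} [MeasurableSpace Ω] {μ : Measure Ω} {f : Ω → ℝ}

lemma MeasureTheory.Integrable.max_sub_const_zero [IsFiniteMeasure μ] (hf : Integrable f μ)
    (a : ℝ) :
    Integrable (fun x => max (f x - a) 0) μ :=
  (hf.sub (integrable_const a)).pos_part

lemma integral_indicator_preimage_const {s : Set ℝ} (hf : AEMeasurable f μ)
    (hs : MeasurableSet s) (c : ℝ) :
    ∫ x, s.indicator (fun _ => c) (f x) ∂μ = μ.real (f ⁻¹' s) * c := by
  simp_rw [← indicator_comp_right]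
  rw [integral_indicator₀ (hf.nullMeasurable hs)]
  exact (setIntegral_const c).trans (smul_eq_mul ..)

lemma integral_max_sub_zero_sub_le [IsFiniteMeasure μ] (hf : Integrable f μ) (q α : ℝ) :
    ∫ x, max (f x - q) 0 ∂μ - ∫ x, max (f x - α) 0 ∂μ ≤ μ.real {x | q < f x} * (α - q) := by
  change _ ≤ μ.real (f ⁻¹' Ioi q) * (α - q)
  rw [← integral_sub (hf.max_sub_const_zero q) (hf.max_sub_const_zero α),
    ← integral_indicator_preimage_const hf.aemeasurable measurableSet_Ioi]
  refine integral_mono ((hf.max_sub_const_zero q).sub (hf.max_sub_const_zero α)) ?_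
    fun x => max_sub_zero_sub_max_sub_zero_le_indicator q α (f x)
  exact ((integrable_const _).indicator measurableSet_Ioi).comp_aemeasurable hf.aemeasurable

lemma le_integral_max_sub_zero_sub [IsFiniteMeasure μ] (hf : Integrable f μ) (q α : ℝ) :
    μ.real {x | q ≤ f x} * (q - α) ≤ ∫ x, max (f x - α) 0 ∂μ - ∫ x, max (f x - q) 0 ∂μ := by
  change μ.real (f ⁻¹' Ici q) * (q - α) ≤ _
  rw [← integral_sub (hf.max_sub_const_zero α) (hf.max_sub_const_zero q),
    ← integral_indicator_preimage_const hf.aemeasurable measurableSet_Ici]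
  refine integral_mono ?_ ((hf.max_sub_const_zero α).sub (hf.max_sub_const_zero q))
    fun x => indicator_le_max_sub_zero_sub_max_sub_zero q α (f x)
  exact ((integrable_const _).indicator measurableSet_Ici).comp_aemeasurable hf.aemeasurable

end Integrals

section Quantile

variable {Ω : Type*} [MeasurableSpace Ω] {p : Measure Ω} [IsProbabilityMeasure p] {f : Ω → ℝ}
  {β q : ℝ}

lemma measureReal_lt_le_one_sub (hf : AEMeasurable f p)
    (hq : ENNReal.ofReal β ≤ p {x | f x ≤ q}) :
    p.real {x | q < f x} ≤ 1 - β := by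
  have hβ : β ≤ p.real {x | f x ≤ q} :=
    (ENNReal.ofReal_le_iff_le_toReal (measure_ne_top _ _)).1 hq
  have hcompl : {x | q < f x} = {x | f x ≤ q}ᶜ := by ext; simp
  rw [hcompl,
    probReal_compl_eq_one_sub₀ (s := {x | f x ≤ q}) (hf.nullMeasurable measurableSet_Iic)]
  linarith

lemma one_sub_le_measureReal_le (hf : AEMeasurable f p) (hβ : 0 ≤ β)
    (hq : p {x | f x < q} ≤ ENNReal.ofReal β) :
    1 - β ≤ p.real {x | q ≤ f x} := by
  have hβ' : p.real {x | f x < q} ≤ β := ENNReal.toReal_le_of_le_ofReal hβ hq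
  have hcompl : {x | q ≤ f x} = {x | f x < q}ᶜ := by ext; simp
  rw [hcompl,
    probReal_compl_eq_one_sub₀ (s := {x | f x < q}) (hf.nullMeasurable measurableSet_Iio)]
  linarith

lemma add_integral_max_sub_zero_le_of_isQuantile (hf : Integrable f p) (hβ0 : 0 ≤ β)
    (hβ1 : β < 1) (hq1 : p {x | f x < q} ≤ ENNReal.ofReal β)
    (hq2 : ENNReal.ofReal β ≤ p {x | f x ≤ q}) (α : ℝ) :
    q + (1 / (1 - β)) * ∫ x, max (f x - q) 0 ∂p ≤
      α + (1 / (1 - β)) * ∫ x, max (f x - α) 0 ∂p := by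
  have hβ : 0 < 1 - β := sub_pos.2 hβ1
  have hscale : ∀ a b : ℝ, 1 / (1 - β) * a - 1 / (1 - β) * b = (a - b) / (1 - β) := by
    intro a b; ring
  rcases le_total q α with hqα | hαq
  · have hgain : (∫ x, max (f x - q) 0 ∂p - ∫ x, max (f x - α) 0 ∂p) / (1 - β) ≤ α - q := by
      rw [div_le_iff₀ hβ]
      calc _ ≤ p.real {x | q < f x} * (α - q) := integral_max_sub_zero_sub_le hf q α
        _ ≤ (1 - β) * (α - q) :=
          mul_le_mul_of_nonneg_right (measureReal_lt_le_one_sub hf.aemeasurable hq2)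
            (sub_nonneg.2 hqα)
        _ = (α - q) * (1 - β) := mul_comm _ _
    linarith [hscale (∫ x, max (f x - q) 0 ∂p) (∫ x, max (f x - α) 0 ∂p)]
  · have hloss : q - α ≤ (∫ x, max (f x - α) 0 ∂p - ∫ x, max (f x - q) 0 ∂p) / (1 - β) := by
      rw [le_div_iff₀ hβ]
      calc (q - α) * (1 - β) = (1 - β) * (q - α) := mul_comm _ _
        _ ≤ p.real {x | q ≤ f x} * (q - α) :=
          mul_le_mul_of_nonneg_right (one_sub_le_measureReal_le hf.aemeasurable hβ0 hq1)
            (sub_nonneg.2 hαq)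
        _ ≤ _ := le_integral_max_sub_zero_sub hf q α
    linarith [hscale (∫ x, max (f x - α) 0 ∂p) (∫ x, max (f x - q) 0 ∂p)]

end Quantile

/-- The variational CVaR expression is attained at any `β`-quantile `q` of `f`, i.e. any
`q` with `p {f < q} ≤ β` and `p {f ≤ q} ≥ β`:
`inf_{α ∈ ℝ} [ α + (1/(1−β)) ∫ (f − α)₊ dp ] = q + (1/(1−β)) ∫ (f − q)₊ dp`. -/
theorem cvar_attained_at_quantile {Ω : Type*} [MeasurableSpace Ω] (p : Measure Ω)
    [IsProbabilityMeasure p] (f : Ω → ℝ) (hf : Integrable f p)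
    (β : ℝ) (hβ0 : 0 < β) (hβ1 : β < 1) (q : ℝ)
    (hq1 : p {x | f x < q} ≤ ENNReal.ofReal β)
    (hq2 : ENNReal.ofReal β ≤ p {x | f x ≤ q}) :
    ⨅ α : ℝ, (α + (1 / (1 - β)) * ∫ x, max (f x - α) 0 ∂p)
      = q + (1 / (1 - β)) * ∫ x, max (f x - q) 0 ∂p :=
  IsLeast.csInf_eq ⟨mem_range_self q, forall_mem_range.2 <|
    add_integral_max_sub_zero_le_of_isQuantile hf hβ0.le hβ1 hq1 hq2⟩
end

section
/- (Worst-case squared loss of a linear regressor over an ℓ₂-ball.) Let d ≥ 1, let θ, x ∈ ℝ^d (Euclidean space with inner product ⟪·,·⟫ and norm ‖·‖₂), let y ∈ ℝ and ε ≥ 0. Then sup_{δ : ‖δ‖₂ ≤ ε} ( ⟪θ, x + δ⟫ − y )² = ( |⟪θ, x⟫ − y| + ε‖θ‖₂ )². -/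
open scoped RealInnerProductSpace

/-- Worst-case squared loss of a linear regressor over an `ℓ₂`-ball:
`sup_{‖δ‖₂ ≤ ε} (⟪θ, x + δ⟫ − y)² = (|⟪θ, x⟫ − y| + ε‖θ‖₂)²`. -/
theorem worst_case_squared_loss (d : ℕ) (hd : 1 ≤ d)
    (θ x : EuclideanSpace ℝ (Fin d)) (y ε : ℝ) (hε : 0 ≤ ε) :
    sSup ((fun δ => (⟪θ, x + δ⟫ - y) ^ 2) ''
        Metric.closedBall (0 : EuclideanSpace ℝ (Fin d)) ε)
      = (|⟪θ, x⟫ - y| + ε * ‖θ‖) ^ 2 := by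
  set a : ℝ := ⟪θ, x⟫ - y with ha
  apply IsGreatest.csSup_eq
  constructor
  · -- membership
    by_cases hθ : θ = 0
    · refine ⟨0, by simpa using hε, ?_⟩
      simp [hθ, ha]
    · have hn : (0:ℝ) < ‖θ‖ := norm_pos_iff.mpr hθ
      set s : ℝ := if 0 ≤ a then 1 else -1 with hs
      refine ⟨(s * ε / ‖θ‖) • θ, ?_, ?_⟩
      · have habs : |s| = 1 := by
          rcases le_or_gt 0 a with h | h <;> simp [hs, h, not_le.mpr]
        simp only [Metric.mem_closedBall, dist_zero_right, norm_smul]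
        rw [Real.norm_eq_abs, abs_div, abs_mul, habs, abs_of_nonneg hε, abs_norm, one_mul,
          div_mul_cancel₀ _ (ne_of_gt hn)]
      · have hinner : ⟪θ, (s * ε / ‖θ‖) • θ⟫ = s * ε * ‖θ‖ := by
          rw [real_inner_smul_right, real_inner_self_eq_norm_sq]
          field_simp
        have : ⟪θ, x + (s * ε / ‖θ‖) • θ⟫ - y = a + s * ε * ‖θ‖ := by
          rw [inner_add_right, hinner, ha]; ring
        show (⟪θ, x + (s * ε / ‖θ‖) • θ⟫ - y) ^ 2 = (|a| + ε * ‖θ‖) ^ 2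
        rw [this]
        rcases le_or_gt 0 a with h | h
        · rw [abs_of_nonneg h]; simp [hs, h]
        · rw [abs_of_neg h]
          have : s = -1 := by simp [hs, not_le.mpr h]
          rw [this]; ring
  · -- upper bound
    rintro v ⟨δ, hδ, rfl⟩
    simp only [Metric.mem_closedBall, dist_zero_right] at hδ
    have h1 : ⟪θ, x + δ⟫ - y = a + ⟪θ, δ⟫ := by rw [inner_add_right, ha]; ring
    show (⟪θ, x + δ⟫ - y) ^ 2 ≤ (|a| + ε * ‖θ‖) ^ 2
    rw [h1]
    have h2 : |a + ⟪θ, δ⟫| ≤ |a| + ε * ‖θ‖ := by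
      calc |a + ⟪θ, δ⟫| ≤ |a| + |⟪θ, δ⟫| := abs_add_le _ _
        _ ≤ |a| + ‖θ‖ * ‖δ‖ := by
            gcongr
            exact abs_real_inner_le_norm θ δ
        _ ≤ |a| + ε * ‖θ‖ := by
            rw [mul_comm]
            gcongr
      
    calc (a + ⟪θ, δ⟫) ^ 2 = |a + ⟪θ, δ⟫| ^ 2 := (sq_abs _).symm
      _ ≤ (|a| + ε * ‖θ‖) ^ 2 := by
          gcongr
end
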